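/- arXiv:1211.6061 — 2 statements merged into one kernel-verified Lean document; each statement's English description precedes it below -/
import Mathlib

section
/- Let n, m ≥ 1 be integers, 1 ≤ p < ∞, and let p' be the conjugate exponent of p. Let G₁ : ℝⁿ × ℝⁿ → ℂ and G₂ : ℝᵐ × ℝᵐ → ℂ be measurable kernels such that G₁(x₁,·) ∈ L^{p'}(ℝⁿ) for almost every x₁ ∈ ℝⁿ and G₂(x₂,·) ∈ L^{p'}(ℝᵐ) for almost every x₂ ∈ ℝᵐ. Define integral operators T₁f(x₁) = ∫_{ℝⁿ} G₁(x₁,y₁) f(y₁) dy₁ and T₂f(x₂) = ∫_{ℝᵐ} G₂(x₂,y₂) f(y₂) dy₂, and let T be the integral operator on ℝⁿ × ℝᵐ with kernel G((x₁,x₂),(y₁,y₂)) = G₁(x₁,y₁)·G₂(x₂,y₂). If T₁ is bounded on L^p(ℝⁿ) and T₂ is bounded on L^p(ℝᵐ), then T is bounded on L^p(ℝⁿ × ℝᵐ) and ‖T‖_{p→p} = ‖T₁‖_{p→p} · ‖T₂‖_{p→p}. -/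
open MeasureTheory Complex ENNReal

/-- The operator norm of `T` on `L^p(μ)`, as the supremum of the ratios
`‖T f‖_p / ‖f‖_p` over nonzero `f ∈ L^p(μ)`. -/
noncomputable def opNormLp {X : Type*} [MeasurableSpace X] (μ : Measure X)
    (p : ℝ≥0∞) (T : (X → ℂ) → X → ℂ) : ℝ≥0∞ :=
  sSup {r : ℝ≥0∞ | ∃ f : X → ℂ, MemLp f p μ ∧ eLpNorm f p μ ≠ 0 ∧
    r = eLpNorm (T f) p μ / eLpNorm f p μ}

/-- The integral operator with kernel `G`. -/
noncomputable def intOp {X : Type*} [MeasurableSpace X] (μ : Measure X)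
    (G : X → X → ℂ) (f : X → ℂ) (x : X) : ℂ :=
  ∫ y, G x y * f y ∂μ

/-!
Fubini writes `T F (x₁, x₂) = T₁ [y₁ ↦ H (y₁, x₂)] (x₁)` with `H (y₁, ·) = T₂ [F (y₁, ·)]`; the
interchange is legitimate because, by Hölder, the kernel slices `G₁(x₁,·) ⊗ G₂(x₂,·) ∈ L^{p'}`
pair integrably with `F ∈ L^p`. By Tonelli, `‖·‖_p^p` on the product is the integral of the
`p`-th powers of the slice norms, so applying `T₂` slicewise and then `T₁` slicewise gives
`‖T F‖_p ≤ ‖T₁‖ ‖T₂‖ ‖F‖_p`. Conversely `T (f ⊗ g) = T₁ f ⊗ T₂ g` and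
`‖f ⊗ g‖_p = ‖f‖_p ‖g‖_p`, so every product of a ratio of `T₁` and one of `T₂` is a ratio of `T`.
-/

namespace MeasureTheory

variable {α β E E' 𝕜 : Type*} [MeasurableSpace α] [MeasurableSpace β]
  {μ : Measure α} {ν : Measure β} [NormedAddCommGroup E] [NormedAddCommGroup E']
  [NormedDivisionRing 𝕜] {p : ℝ≥0∞}

lemma MemLp.ae_memLp_prodMk_left [SFinite ν] (hp0 : p ≠ 0) (hp_top : p ≠ ∞)
    {f : α × β → E} (hf : MemLp f p (μ.prod ν)) :
    ∀ᵐ x ∂μ, MemLp (fun y => f (x, y)) p ν := by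
  have hfp : AEMeasurable (fun z => ‖f z‖ₑ ^ p.toReal) (μ.prod ν) := hf.1.enorm.pow_const _
  have hfin := (eLpNorm_lt_top_iff_lintegral_rpow_enorm_lt_top hp0 hp_top).mp hf.2
  rw [lintegral_prod _ hfp] at hfin
  filter_upwards [hf.1.prodMk_left, ae_lt_top' hfp.lintegral_prod_right' hfin.ne]
    with x hx_meas hx_fin
  exact ⟨hx_meas, (eLpNorm_lt_top_iff_lintegral_rpow_enorm_lt_top hp0 hp_top).mpr hx_fin⟩

lemma MemLp.ae_memLp_prodMk_right [SFinite μ] [SFinite ν] (hp0 : p ≠ 0) (hp_top : p ≠ ∞)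
    {f : α × β → E} (hf : MemLp f p (μ.prod ν)) :
    ∀ᵐ y ∂ν, MemLp (fun x => f (x, y)) p μ :=
  (hf.comp_measurePreserving Measure.measurePreserving_swap).ae_memLp_prodMk_left hp0 hp_top

lemma eLpNorm_le_mul_of_ae_eLpNorm_prodMk_left_le [SFinite ν] (hp0 : p ≠ 0) (hp_top : p ≠ ∞)
    {f : α × β → E} {g : α × β → E'} (hf : AEStronglyMeasurable f (μ.prod ν))
    (hg : AEStronglyMeasurable g (μ.prod ν)) {C : ℝ≥0∞}
    (h : ∀ᵐ x ∂μ, eLpNorm (fun y => f (x, y)) p ν ≤ C * eLpNorm (fun y => g (x, y)) p ν) :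
    eLpNorm f p (μ.prod ν) ≤ C * eLpNorm g p (μ.prod ν) := by
  lift p to NNReal using hp_top
  replace hp0 : p ≠ 0 := by exact_mod_cast hp0
  have hp : (0 : ℝ) < p := by positivity
  have hg_pow : AEMeasurable (fun z => ‖g z‖ₑ ^ (p : ℝ)) (μ.prod ν) := hg.enorm.pow_const _
  rw [← ENNReal.rpow_le_rpow_iff hp, ENNReal.mul_rpow_of_nonneg _ _ hp.le,
    eLpNorm_nnreal_pow_eq_lintegral hp0, eLpNorm_nnreal_pow_eq_lintegral hp0,
    lintegral_prod _ (hf.enorm.pow_const _), lintegral_prod _ hg_pow,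
    ← lintegral_const_mul'' _ hg_pow.lintegral_prod_right']
  refine lintegral_mono_ae ?_
  filter_upwards [h] with x hx
  rw [← eLpNorm_nnreal_pow_eq_lintegral hp0, ← eLpNorm_nnreal_pow_eq_lintegral hp0,
    ← ENNReal.mul_rpow_of_nonneg _ _ hp.le]
  exact ENNReal.rpow_le_rpow hx hp.le

lemma eLpNorm_le_mul_of_ae_eLpNorm_prodMk_right_le [SFinite μ] [SFinite ν] (hp0 : p ≠ 0)
    (hp_top : p ≠ ∞) {f : α × β → E} {g : α × β → E'} (hf : AEStronglyMeasurable f (μ.prod ν))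
    (hg : AEStronglyMeasurable g (μ.prod ν)) {C : ℝ≥0∞}
    (h : ∀ᵐ y ∂ν, eLpNorm (fun x => f (x, y)) p μ ≤ C * eLpNorm (fun x => g (x, y)) p μ) :
    eLpNorm f p (μ.prod ν) ≤ C * eLpNorm g p (μ.prod ν) := by
  have hswap := Measure.measurePreserving_swap (μ := ν) (ν := μ)
  rw [← eLpNorm_comp_measurePreserving hf hswap, ← eLpNorm_comp_measurePreserving hg hswap]
  exact eLpNorm_le_mul_of_ae_eLpNorm_prodMk_left_le hp0 hp_top hf.prod_swap hg.prod_swap h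

lemma eLpNorm_prod_mul [SFinite ν] (hp0 : p ≠ 0) (hp_top : p ≠ ∞) {f : α → 𝕜} {g : β → 𝕜}
    (hf : AEStronglyMeasurable f μ) (hg : AEStronglyMeasurable g ν) :
    eLpNorm (fun z => f z.1 * g z.2) p (μ.prod ν) = eLpNorm f p μ * eLpNorm g p ν := by
  simp only [eLpNorm_eq_lintegral_rpow_enorm_toReal hp0 hp_top]
  rw [← ENNReal.mul_rpow_of_nonneg _ _ (by positivity),
    ← lintegral_prod_mul (hf.enorm.pow_const _) (hg.enorm.pow_const _)]
  simp only [enorm_mul, ENNReal.mul_rpow_of_nonneg _ _ toReal_nonneg]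

lemma eLpNorm_top_prod_mul_le {f : α → 𝕜} {g : β → 𝕜} :
    eLpNorm (fun z => f z.1 * g z.2) ∞ (μ.prod ν) ≤ eLpNorm f ∞ μ * eLpNorm g ∞ ν := by
  simp only [eLpNorm_exponent_top]
  refine eLpNormEssSup_le_of_ae_enorm_bound ?_
  filter_upwards [Measure.quasiMeasurePreserving_fst.ae (ae_le_eLpNormEssSup (f := f)),
    Measure.quasiMeasurePreserving_snd.ae (ae_le_eLpNormEssSup (f := g))] with z hf hg
  rw [enorm_mul]
  exact mul_le_mul' hf hg

lemma MemLp.prod_mul [SFinite ν] {f : α → 𝕜} {g : β → 𝕜} (hf : MemLp f p μ) (hg : MemLp g p ν) :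
    MemLp (fun z => f z.1 * g z.2) p (μ.prod ν) := by
  refine ⟨hf.1.comp_fst.mul hg.1.comp_snd, ?_⟩
  rcases eq_or_ne p 0 with rfl | hp0
  · simp
  rcases eq_or_ne p ∞ with rfl | hp_top
  · exact eLpNorm_top_prod_mul_le.trans_lt (mul_lt_top hf.2 hg.2)
  · rw [eLpNorm_prod_mul hp0 hp_top hf.1 hg.1]
    exact mul_lt_top hf.2 hg.2

end MeasureTheory

section IntegralOperator

variable {α β : Type*} [MeasurableSpace α] [MeasurableSpace β] {μ : Measure α} {ν : Measure β}
  {p p' : ℝ≥0∞}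

lemma intOp_congr_ae {G : α → α → ℂ} {f f' : α → ℂ} (h : f =ᵐ[μ] f') :
    intOp μ G f = intOp μ G f' :=
  funext fun _ => integral_congr_ae (h.mono fun y hy => by simp only [hy])

lemma intOp_zero (G : α → α → ℂ) : intOp μ G 0 = 0 :=
  funext fun _ => by simp [intOp]

lemma aestronglyMeasurable_intOp [SFinite μ] {G : α → α → ℂ} (hG : Measurable (Function.uncurry G))
    {f : α → ℂ} (hf : AEStronglyMeasurable f μ) : AEStronglyMeasurable (intOp μ G f) μ :=
  (hG.aestronglyMeasurable.mul hf.comp_snd).integral_prod_right'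

lemma intOp_prod_mul [SFinite μ] [SFinite ν] (G₁ : α → α → ℂ) (G₂ : β → β → ℂ)
    (f : α → ℂ) (g : β → ℂ) :
    intOp (μ.prod ν) (fun x y => G₁ x.1 y.1 * G₂ x.2 y.2) (fun z => f z.1 * g z.2) =
      fun z => intOp μ G₁ f z.1 * intOp ν G₂ g z.2 := by
  funext z
  simp only [intOp]
  rw [← integral_prod_mul]
  simp only [mul_mul_mul_comm]

/-- Fubini is licensed by Hölder: `G₁(x₁,·) ⊗ G₂(x₂,·) ∈ L^{p'}` pairs integrably with
`F ∈ L^p`. -/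
lemma intOp_prod_ae_eq [SFinite μ] [SFinite ν] [p.HolderConjugate p'] {G₁ : α → α → ℂ}
    {G₂ : β → β → ℂ} (hG₁ : ∀ᵐ x₁ ∂μ, MemLp (G₁ x₁) p' μ) (hG₂ : ∀ᵐ x₂ ∂ν, MemLp (G₂ x₂) p' ν)
    {F : α × β → ℂ} (hF : MemLp F p (μ.prod ν)) :
    intOp (μ.prod ν) (fun x y => G₁ x.1 y.1 * G₂ x.2 y.2) F =ᵐ[μ.prod ν]
      fun z => intOp μ G₁ (fun y₁ => intOp ν G₂ (fun y₂ => F (y₁, y₂)) z.2) z.1 := by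
  filter_upwards [Measure.quasiMeasurePreserving_fst.ae hG₁,
    Measure.quasiMeasurePreserving_snd.ae hG₂] with z hz₁ hz₂
  have hint : Integrable (fun y => G₁ z.1 y.1 * G₂ z.2 y.2 * F y) (μ.prod ν) :=
    (hz₁.prod_mul hz₂).integrable_mul hF
  simp only [intOp]
  rw [integral_prod _ hint]
  simp only [← integral_const_mul, mul_assoc]

lemma eLpNorm_intOp_prod_le [SFinite μ] [SFinite ν] [p.HolderConjugate p'] (hp_top : p ≠ ∞)
    {G₁ : α → α → ℂ} {G₂ : β → β → ℂ}
    (hG₁m : Measurable (Function.uncurry G₁)) (hG₂m : Measurable (Function.uncurry G₂))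
    (hG₁ : ∀ᵐ x₁ ∂μ, MemLp (G₁ x₁) p' μ) (hG₂ : ∀ᵐ x₂ ∂ν, MemLp (G₂ x₂) p' ν)
    {N₁ N₂ : ℝ≥0∞} (hN₂ : N₂ ≠ ∞)
    (hT₁ : ∀ f, MemLp f p μ → eLpNorm (intOp μ G₁ f) p μ ≤ N₁ * eLpNorm f p μ)
    (hT₂ : ∀ f, MemLp f p ν → eLpNorm (intOp ν G₂ f) p ν ≤ N₂ * eLpNorm f p ν)
    {F : α × β → ℂ} (hF : MemLp F p (μ.prod ν)) :
    eLpNorm (intOp (μ.prod ν) (fun x y => G₁ x.1 y.1 * G₂ x.2 y.2) F) p (μ.prod ν) ≤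
      N₁ * N₂ * eLpNorm F p (μ.prod ν) := by
  wlog hFm : StronglyMeasurable F generalizing F
  · obtain ⟨F', hF'm, hFF'⟩ := hF.1
    rw [intOp_congr_ae hFF', eLpNorm_congr_ae hFF']
    exact this (hF.ae_eq hFF') hF'm
  have hp0 : p ≠ 0 := HolderConjugate.ne_zero p p'
  let H : α × β → ℂ := fun w => intOp ν G₂ (fun y₂ => F (w.1, y₂)) w.2
  have hHm : AEStronglyMeasurable H (μ.prod ν) := by
    have : Measurable fun u : (α × β) × β => G₂ u.1.2 u.2 * F (u.1.1, u.2) :=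
      (hG₂m.comp ((measurable_snd.comp measurable_fst).prodMk measurable_snd)).mul
        (hFm.measurable.comp ((measurable_fst.comp measurable_fst).prodMk measurable_snd))
    exact this.aestronglyMeasurable.integral_prod_right'
  have hH : eLpNorm H p (μ.prod ν) ≤ N₂ * eLpNorm F p (μ.prod ν) :=
    eLpNorm_le_mul_of_ae_eLpNorm_prodMk_left_le hp0 hp_top hHm hF.1 <| by
      filter_upwards [hF.ae_memLp_prodMk_left hp0 hp_top] with x hx
      have hslice : (fun y => H (x, y)) = intOp ν G₂ (fun y => F (x, y)) := rfl
      rw [hslice]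
      exact hT₂ _ hx
  have hH_memLp : MemLp H p (μ.prod ν) := ⟨hHm, hH.trans_lt (mul_lt_top hN₂.lt_top hF.2)⟩
  have hTF := intOp_prod_ae_eq hG₁ hG₂ hF
  have hTFm : AEStronglyMeasurable (intOp (μ.prod ν) (fun x y => G₁ x.1 y.1 * G₂ x.2 y.2) F)
      (μ.prod ν) :=
    aestronglyMeasurable_intOp (((hG₁m.comp (measurable_fst.fst.prodMk measurable_snd.fst)).mul
      (hG₂m.comp (measurable_fst.snd.prodMk measurable_snd.snd)))) hF.1
  calc eLpNorm (intOp (μ.prod ν) (fun x y => G₁ x.1 y.1 * G₂ x.2 y.2) F) p (μ.prod ν)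
      = eLpNorm (fun z => intOp μ G₁ (fun y₁ => H (y₁, z.2)) z.1) p (μ.prod ν) :=
        eLpNorm_congr_ae hTF
    _ ≤ N₁ * eLpNorm H p (μ.prod ν) :=
        eLpNorm_le_mul_of_ae_eLpNorm_prodMk_right_le hp0 hp_top (hTFm.congr hTF) hHm <| by
          filter_upwards [hH_memLp.ae_memLp_prodMk_right hp0 hp_top] with y hy using hT₁ _ hy
    _ ≤ N₁ * N₂ * eLpNorm F p (μ.prod ν) := by
        rw [mul_assoc]
        gcongr

end IntegralOperator

section OperatorNorm

variable {α β : Type*} [MeasurableSpace α] [MeasurableSpace β] {μ : Measure α} {ν : Measure β}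
  {p : ℝ≥0∞}

lemma opNormLp_le {T : (α → ℂ) → α → ℂ} {C : ℝ≥0∞}
    (hC : ∀ f, MemLp f p μ → eLpNorm (T f) p μ ≤ C * eLpNorm f p μ) :
    opNormLp μ p T ≤ C := by
  refine sSup_le ?_
  rintro _ ⟨f, hf, -, rfl⟩
  exact ENNReal.div_le_of_le_mul (hC f hf)

lemma div_le_opNormLp {T : (α → ℂ) → α → ℂ} {f : α → ℂ} (hf : MemLp f p μ)
    (hf0 : eLpNorm f p μ ≠ 0) : eLpNorm (T f) p μ / eLpNorm f p μ ≤ opNormLp μ p T :=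
  le_sSup ⟨f, hf, hf0, rfl⟩

lemma eLpNorm_intOp_le_opNormLp_mul (hp0 : p ≠ 0) (G : α → α → ℂ) {f : α → ℂ}
    (hf : MemLp f p μ) :
    eLpNorm (intOp μ G f) p μ ≤ opNormLp μ p (intOp μ G) * eLpNorm f p μ := by
  by_cases hf0 : eLpNorm f p μ = 0
  · rw [intOp_congr_ae ((eLpNorm_eq_zero_iff hf.1 hp0).mp hf0)]
    simp only [intOp_zero, eLpNorm_zero, zero_le]
  · calc eLpNorm (intOp μ G f) p μ
        = eLpNorm (intOp μ G f) p μ / eLpNorm f p μ * eLpNorm f p μ :=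
          (ENNReal.div_mul_cancel hf0 hf.eLpNorm_ne_top).symm
      _ ≤ opNormLp μ p (intOp μ G) * eLpNorm f p μ :=
          mul_le_mul_left (div_le_opNormLp hf hf0) _

lemma opNormLp_mul_opNormLp_le_opNormLp_prod [SFinite ν] (hp0 : p ≠ 0) (hp_top : p ≠ ∞)
    {T₁ : (α → ℂ) → α → ℂ} {T₂ : (β → ℂ) → β → ℂ} {T : (α × β → ℂ) → α × β → ℂ}
    (hT₁ : ∀ f, MemLp f p μ → AEStronglyMeasurable (T₁ f) μ)
    (hT₂ : ∀ g, MemLp g p ν → AEStronglyMeasurable (T₂ g) ν)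
    (hT : ∀ f g, T (fun z => f z.1 * g z.2) = fun z => T₁ f z.1 * T₂ g z.2) :
    opNormLp μ p T₁ * opNormLp ν p T₂ ≤ opNormLp (μ.prod ν) p T := by
  rw [opNormLp, ENNReal.sSup_mul]
  refine iSup₂_le ?_
  rintro _ ⟨f, hf, hf0, rfl⟩
  rw [opNormLp, ENNReal.mul_sSup]
  refine iSup₂_le ?_
  rintro _ ⟨g, hg, hg0, rfl⟩
  refine le_sSup ⟨_, hf.prod_mul hg, ?_, ?_⟩
  · rw [eLpNorm_prod_mul hp0 hp_top hf.1 hg.1]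
    exact mul_ne_zero hf0 hg0
  · rw [hT, eLpNorm_prod_mul hp0 hp_top (hT₁ f hf) (hT₂ g hg),
      eLpNorm_prod_mul hp0 hp_top hf.1 hg.1,
      ENNReal.mul_div_mul_comm (Or.inl hf0) (Or.inl hf.eLpNorm_ne_top)]

end OperatorNorm

theorem segal_tensor_opNorm_general (n m : ℕ)
    (p p' : ℝ≥0∞) (hp_top : p ≠ ∞) (hpp' : p⁻¹ + p'⁻¹ = 1)
    (G₁ : (Fin n → ℝ) → (Fin n → ℝ) → ℂ) (G₂ : (Fin m → ℝ) → (Fin m → ℝ) → ℂ)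
    (hG₁meas : Measurable (Function.uncurry G₁))
    (hG₂meas : Measurable (Function.uncurry G₂))
    (hG₁ : ∀ᵐ x₁ ∂(volume : Measure (Fin n → ℝ)), MemLp (G₁ x₁) p' volume)
    (hG₂ : ∀ᵐ x₂ ∂(volume : Measure (Fin m → ℝ)), MemLp (G₂ x₂) p' volume)
    (hT₁ : ∃ C : ℝ≥0∞, C ≠ ∞ ∧ ∀ f : (Fin n → ℝ) → ℂ, MemLp f p volume →
      eLpNorm (intOp volume G₁ f) p volume ≤ C * eLpNorm f p volume)
    (hT₂ : ∃ C : ℝ≥0∞, C ≠ ∞ ∧ ∀ f : (Fin m → ℝ) → ℂ, MemLp f p volume →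
      eLpNorm (intOp volume G₂ f) p volume ≤ C * eLpNorm f p volume) :
    (∃ C : ℝ≥0∞, C ≠ ∞ ∧ ∀ F : (Fin n → ℝ) × (Fin m → ℝ) → ℂ, MemLp F p volume →
      eLpNorm (intOp volume (fun x y => G₁ x.1 y.1 * G₂ x.2 y.2) F) p volume ≤
        C * eLpNorm F p volume) ∧
    opNormLp (volume : Measure ((Fin n → ℝ) × (Fin m → ℝ))) p
        (intOp volume fun x y => G₁ x.1 y.1 * G₂ x.2 y.2) =
      opNormLp (volume : Measure (Fin n → ℝ)) p (intOp volume G₁) *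
        opNormLp (volume : Measure (Fin m → ℝ)) p (intOp volume G₂) := by
  have : p.HolderConjugate p' := ENNReal.holderConjugate_iff.mpr hpp'
  have hp0 : p ≠ 0 := HolderConjugate.ne_zero p p'
  obtain ⟨C₁, hC₁, hT₁⟩ := hT₁
  obtain ⟨C₂, hC₂, hT₂⟩ := hT₂
  have hN₁ := ne_top_of_le_ne_top hC₁ (opNormLp_le hT₁)
  have hN₂ := ne_top_of_le_ne_top hC₂ (opNormLp_le hT₂)
  have hT : ∀ F : (Fin n → ℝ) × (Fin m → ℝ) → ℂ, MemLp F p volume →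
      eLpNorm (intOp volume (fun x y => G₁ x.1 y.1 * G₂ x.2 y.2) F) p volume ≤
        opNormLp volume p (intOp volume G₁) * opNormLp volume p (intOp volume G₂) *
          eLpNorm F p volume := by
    intro F hF
    rw [Measure.volume_eq_prod] at hF ⊢
    exact eLpNorm_intOp_prod_le hp_top hG₁meas hG₂meas hG₁ hG₂ hN₂
      (fun _ => eLpNorm_intOp_le_opNormLp_mul hp0 G₁)
      (fun _ => eLpNorm_intOp_le_opNormLp_mul hp0 G₂) hF
  refine ⟨⟨_, mul_ne_top hN₁ hN₂, hT⟩, le_antisymm (opNormLp_le hT) ?_⟩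
  rw [Measure.volume_eq_prod]
  exact opNormLp_mul_opNormLp_le_opNormLp_prod hp0 hp_top
    (fun _ hf => aestronglyMeasurable_intOp hG₁meas hf.1)
    (fun _ hg => aestronglyMeasurable_intOp hG₂meas hg.1) (intOp_prod_mul G₁ G₂)

/-- **Proposition (Segal's lemma for tensor products of integral operators)**: if the
integral operators `T₁`, `T₂` with kernels `G₁`, `G₂` (whose slices `Gᵢ(xᵢ,·)` lie in
`L^{p'}` for a.e. `xᵢ`) are bounded on `L^p(ℝⁿ)` and `L^p(ℝᵐ)` respectively, then the
integral operator `T` with kernel `G((x₁,x₂),(y₁,y₂)) = G₁(x₁,y₁) G₂(x₂,y₂)` is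
bounded on `L^p(ℝⁿ × ℝᵐ)` and `‖T‖_{p→p} = ‖T₁‖_{p→p} ‖T₂‖_{p→p}`. -/
theorem segal_tensor_opNorm (n m : ℕ) (hn : 1 ≤ n) (hm : 1 ≤ m)
    (p p' : ℝ≥0∞) (hp : 1 ≤ p) (hp_top : p ≠ ∞) (hpp' : p⁻¹ + p'⁻¹ = 1)
    (G₁ : (Fin n → ℝ) → (Fin n → ℝ) → ℂ) (G₂ : (Fin m → ℝ) → (Fin m → ℝ) → ℂ)
    (hG₁meas : Measurable (Function.uncurry G₁))
    (hG₂meas : Measurable (Function.uncurry G₂))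
    (hG₁ : ∀ᵐ x₁ ∂(volume : Measure (Fin n → ℝ)), MemLp (G₁ x₁) p' volume)
    (hG₂ : ∀ᵐ x₂ ∂(volume : Measure (Fin m → ℝ)), MemLp (G₂ x₂) p' volume)
    (hT₁ : ∃ C : ℝ≥0∞, C ≠ ∞ ∧ ∀ f : (Fin n → ℝ) → ℂ, MemLp f p volume →
      eLpNorm (intOp volume G₁ f) p volume ≤ C * eLpNorm f p volume)
    (hT₂ : ∃ C : ℝ≥0∞, C ≠ ∞ ∧ ∀ f : (Fin m → ℝ) → ℂ, MemLp f p volume →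
      eLpNorm (intOp volume G₂ f) p volume ≤ C * eLpNorm f p volume) :
    (∃ C : ℝ≥0∞, C ≠ ∞ ∧ ∀ F : (Fin n → ℝ) × (Fin m → ℝ) → ℂ, MemLp F p volume →
      eLpNorm (intOp volume (fun x y => G₁ x.1 y.1 * G₂ x.2 y.2) F) p volume ≤
        C * eLpNorm F p volume) ∧
    opNormLp (volume : Measure ((Fin n → ℝ) × (Fin m → ℝ))) p
        (intOp volume fun x y => G₁ x.1 y.1 * G₂ x.2 y.2) =
      opNormLp (volume : Measure (Fin n → ℝ)) p (intOp volume G₁) *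
        opNormLp (volume : Measure (Fin m → ℝ)) p (intOp volume G₂) :=
  segal_tensor_opNorm_general n m p p' hp_top hpp' G₁ G₂ hG₁meas hG₂meas hG₁ hG₂ hT₁ hT₂
end

section
/- Let 1 < p < ∞, A ∈ 𝒜², and U ∈ SO(2) (a real orthogonal 2×2 matrix with determinant 1). Then Uᵀ·A·U ∈ 𝒜² and h_p(A) = h_p(Uᵀ·A·U). -/
open MeasureTheory Complex ENNReal Matrix

/-- The matrix `J = [[0,−1],[1,0]]`. -/
def J2 : Matrix (Fin 2) (Fin 2) ℝ := !![0, -1; 1, 0]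

/-- `Ω(M) = Jᵀ Re(M) J − Re(M) − Im(M) J − Jᵀ Im(M)` for a complex `2 × 2` matrix. -/
def Omega2 (M : Matrix (Fin 2) (Fin 2) ℂ) : Matrix (Fin 2) (Fin 2) ℝ :=
  J2ᵀ * M.map Complex.re * J2 - M.map Complex.re -
    M.map Complex.im * J2 - J2ᵀ * M.map Complex.im

/-- The function `h_p(A) = det Re(A) / ( |det(A+I)|^p det(I + Ω((I+A)⁻¹)) )`. -/
noncomputable def hFun (p : ℝ) (A : Matrix (Fin 2) (Fin 2) ℂ) : ℝ :=
  (A.map Complex.re).det /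
    (‖(A + 1).det‖ ^ p *
      ((1 : Matrix (Fin 2) (Fin 2) ℝ) + Omega2 ((1 + A)⁻¹)).det)

/-- Coordinates `(a,d,b,e,g,f)` on the 6-real-dimensional space of complex symmetric
`2 × 2` matrices: `toMat v = [[a+ie, b+if],[b+if, d+ig]]`. -/
def toMat (v : Fin 6 → ℝ) : Matrix (Fin 2) (Fin 2) ℂ :=
  !![⟨v 0, v 3⟩, ⟨v 2, v 5⟩; ⟨v 2, v 5⟩, ⟨v 1, v 4⟩]

/-!
Every ingredient of `h_p` is equivariant under the congruence `A ↦ Uᵀ A U` by a real orthogonal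
`U`: real and imaginary parts are taken entrywise, `1 + Uᵀ A U = Uᵀ (1 + A) U` and
`(Uᵀ M U)⁻¹ = Uᵀ M⁻¹ U`, and determinants are invariant. The only place where `det U = 1`
enters is `Ω`, which is equivariant because rotations commute with `J`.
-/

namespace Matrix

section Congruence

variable {n R : Type*} [Fintype n] [CommRing R]

theorem IsSymm.transpose_mul_mul {m : Type*} {A : Matrix n n R} (hA : A.IsSymm)
    (B : Matrix n m R) : (Bᵀ * A * B).IsSymm := by
  rw [IsSymm, transpose_mul, transpose_mul, transpose_transpose, hA.eq, Matrix.mul_assoc]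

variable [DecidableEq n] {U : Matrix n n R}

theorem det_transpose_mul_mul_of_transpose_mul_self (hU : Uᵀ * U = 1) (M : Matrix n n R) :
    (Uᵀ * M * U).det = M.det := by
  rw [det_mul, det_mul, mul_right_comm, ← det_mul, hU, det_one, one_mul]

theorem one_add_transpose_mul_mul_of_transpose_mul_self (hU : Uᵀ * U = 1) (M : Matrix n n R) :
    1 + Uᵀ * M * U = Uᵀ * (1 + M) * U := by
  rw [Matrix.mul_add, Matrix.add_mul, Matrix.mul_one, hU]

theorem inv_transpose_mul_mul_of_transpose_mul_self (hU : Uᵀ * U = 1) (M : Matrix n n R) :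
    (Uᵀ * M * U)⁻¹ = Uᵀ * M⁻¹ * U := by
  rw [Matrix.mul_inv_rev, Matrix.mul_inv_rev, inv_eq_left_inv hU,
    inv_eq_left_inv (mul_eq_one_comm.mp hU), Matrix.mul_assoc]

end Congruence

section RealPart

variable {l m n : Type*} [Fintype m]

theorem map_re_ofReal_mul (U : Matrix l m ℝ) (M : Matrix m n ℂ) :
    (U.map ofReal * M).map re = U * M.map re := by
  ext i j
  simp [mul_apply, re_sum]

theorem map_re_mul_ofReal (M : Matrix l m ℂ) (U : Matrix m n ℝ) :
    (M * U.map ofReal).map re = M.map re * U := by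
  ext i j
  simp [mul_apply, re_sum]

theorem map_im_ofReal_mul (U : Matrix l m ℝ) (M : Matrix m n ℂ) :
    (U.map ofReal * M).map im = U * M.map im := by
  ext i j
  simp [mul_apply, im_sum]

theorem map_im_mul_ofReal (M : Matrix l m ℂ) (U : Matrix m n ℝ) :
    (M * U.map ofReal).map im = M.map im * U := by
  ext i j
  simp [mul_apply, im_sum]

end RealPart

section RealCongruence

variable {m n : Type*} [Fintype n]

theorem map_re_transpose_ofReal_mul_mul (U : Matrix n m ℝ) (M : Matrix n n ℂ) :
    ((U.map ofReal)ᵀ * M * U.map ofReal).map re = Uᵀ * M.map re * U := by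
  rw [← transpose_map, map_re_mul_ofReal, map_re_ofReal_mul]

theorem map_im_transpose_ofReal_mul_mul (U : Matrix n m ℝ) (M : Matrix n n ℂ) :
    ((U.map ofReal)ᵀ * M * U.map ofReal).map im = Uᵀ * M.map im * U := by
  rw [← transpose_map, map_im_mul_ofReal, map_im_ofReal_mul]

theorem transpose_ofReal_mul_self [DecidableEq n] {U : Matrix n n ℝ} (hU : Uᵀ * U = 1) :
    (U.map ofReal)ᵀ * U.map ofReal = 1 := by
  have h := congrArg (·.map ofRealHom) hU
  rwa [Matrix.map_mul, Matrix.map_one _ (map_zero _) (map_one _), transpose_map] at h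

end RealCongruence

end Matrix

theorem commute_J2_of_transpose_mul_self_of_det_eq_one {U : Matrix (Fin 2) (Fin 2) ℝ}
    (hU : Uᵀ * U = 1) (hdet : U.det = 1) : Commute U J2 := by
  have hnorm : U 0 0 * U 0 0 + U 1 0 * U 1 0 = 1 := by
    simpa [mul_apply, Fin.sum_univ_two] using congrFun₂ hU 0 0
  have horth : U 0 0 * U 0 1 + U 1 0 * U 1 1 = 0 := by
    simpa [mul_apply, Fin.sum_univ_two] using congrFun₂ hU 0 1
  rw [det_fin_two] at hdet
  have h11 : U 1 1 = U 0 0 := by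
    linear_combination U 0 0 * hdet + U 1 0 * horth - U 1 1 * hnorm
  have h01 : U 0 1 = -U 1 0 := by
    linear_combination U 0 0 * horth - U 1 0 * hdet - U 0 1 * hnorm
  ext i j
  fin_cases i <;> fin_cases j <;>
    simp [J2, mul_apply, Fin.sum_univ_two, h11, h01]

theorem Omega2_transpose_ofReal_mul_mul {U : Matrix (Fin 2) (Fin 2) ℝ} (hUJ : Commute U J2)
    (M : Matrix (Fin 2) (Fin 2) ℂ) :
    Omega2 ((U.map ofReal)ᵀ * M * U.map ofReal) = Uᵀ * Omega2 M * U := by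
  have hUJt : ∀ X : Matrix (Fin 2) (Fin 2) ℝ, J2ᵀ * (Uᵀ * X) = Uᵀ * (J2ᵀ * X) := fun X => by
    rw [← Matrix.mul_assoc, ← Matrix.mul_assoc, ← transpose_mul, ← transpose_mul, hUJ.eq]
  rw [Omega2, Omega2, map_re_transpose_ofReal_mul_mul, map_im_transpose_ofReal_mul_mul]
  simp only [Matrix.mul_sub, Matrix.sub_mul, Matrix.mul_assoc, hUJ.eq, hUJt]

theorem hFun_transpose_ofReal_mul_mul (p : ℝ) (A : Matrix (Fin 2) (Fin 2) ℂ)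
    {U : Matrix (Fin 2) (Fin 2) ℝ} (hU : Uᵀ * U = 1) (hUJ : Commute U J2) :
    hFun p ((U.map ofReal)ᵀ * A * U.map ofReal) = hFun p A := by
  set V := U.map ofReal
  have hV : Vᵀ * V = 1 := transpose_ofReal_mul_self hU
  have hdet_add_one : (Vᵀ * A * V + 1).det = (A + 1).det := by
    rw [add_comm, one_add_transpose_mul_mul_of_transpose_mul_self hV,
      det_transpose_mul_mul_of_transpose_mul_self hV, add_comm]
  rw [hFun, hFun, map_re_transpose_ofReal_mul_mul, det_transpose_mul_mul_of_transpose_mul_self hU,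
    hdet_add_one, one_add_transpose_mul_mul_of_transpose_mul_self hV,
    inv_transpose_mul_mul_of_transpose_mul_self hV, Omega2_transpose_ofReal_mul_mul hUJ,
    one_add_transpose_mul_mul_of_transpose_mul_self hU,
    det_transpose_mul_mul_of_transpose_mul_self hU]

theorem hFun_SO2_invariant_general (p : ℝ) (A : Matrix (Fin 2) (Fin 2) ℂ)
    (hsymm : A.IsSymm) (hpos : (A.map Complex.re).PosDef)
    (U : Matrix (Fin 2) (Fin 2) ℝ) (hU : Uᵀ * U = 1) (hdet : U.det = 1) :
    ((U.map Complex.ofReal)ᵀ * A * U.map Complex.ofReal).IsSymm ∧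
    ((((U.map Complex.ofReal)ᵀ * A * U.map Complex.ofReal).map Complex.re).PosDef) ∧
    hFun p A = hFun p ((U.map Complex.ofReal)ᵀ * A * U.map Complex.ofReal) := by
  have hUinj : Function.Injective U.mulVec :=
    mulVec_injective_of_isUnit ((isUnit_iff_isUnit_det U).mpr (isUnit_det_of_left_inverse hU))
  refine ⟨hsymm.transpose_mul_mul _, ?_, ?_⟩
  · rw [map_re_transpose_ofReal_mul_mul]
    simpa using hpos.conjTranspose_mul_mul_same hUinj
  · exact (hFun_transpose_ofReal_mul_mul p A hU
      (commute_J2_of_transpose_mul_self_of_det_eq_one hU hdet)).symm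

/-- **Lemma (rotation invariance of `h_p`)**: for `1 < p < ∞`, `A ∈ 𝒜²` (complex
symmetric with positive definite real part), and `U ∈ SO(2)`, the matrix `Uᵀ A U`
again lies in `𝒜²` and `h_p(A) = h_p(Uᵀ A U)`. -/
theorem hFun_SO2_invariant (p : ℝ) (hp : 1 < p) (A : Matrix (Fin 2) (Fin 2) ℂ)
    (hsymm : A.IsSymm) (hpos : (A.map Complex.re).PosDef)
    (U : Matrix (Fin 2) (Fin 2) ℝ) (hU : Uᵀ * U = 1) (hdet : U.det = 1) :
    ((U.map Complex.ofReal)ᵀ * A * U.map Complex.ofReal).IsSymm ∧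
    ((((U.map Complex.ofReal)ᵀ * A * U.map Complex.ofReal).map Complex.re).PosDef) ∧
    hFun p A = hFun p ((U.map Complex.ofReal)ᵀ * A * U.map Complex.ofReal) :=
  hFun_SO2_invariant_general p A hsymm hpos U hU hdet
end
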